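/- arXiv:2103.07504 — 8 statements merged into one kernel-verified Lean document; each statement's English description precedes it below -/
import Mathlib

section
/- Let λ₀ = 1/4 + R·cos(θ)/2 + δ, λ₁ = 1/4 + R·sin(θ)/2 − δ, λ₂ = 1/4 − R·sin(θ)/2 − δ, λ₃ = 1/4 − R·cos(θ)/2 + δ with R > 1/√2, 0 ≤ θ ≤ π/4 − arccos(1/(R√2)), and R ≤ 1. Then δ* := R²·cos(2θ)/4 satisfies −1/4 + R·cos(θ)/2 ≤ δ* ≤ 1/4 − R·sin(θ)/2 (i.e., δ* lies in the range making all λᵢ nonnegative). -/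
open Real

set_option maxHeartbeats 1000000 in
/-- the optimal δ* = R²cos(2θ)/4 lies within the valid range of δ. -/
theorem deltaStar_in_range (R θ : ℝ)
    (hR : 1 / Real.sqrt 2 < R) (hR1 : R ≤ 1)
    (hθ0 : 0 ≤ θ) (hθ : θ ≤ π / 4 - Real.arccos (1 / (R * Real.sqrt 2))) :
    -1 / 4 + R * Real.cos θ / 2 ≤ R ^ 2 * Real.cos (2 * θ) / 4 ∧
      R ^ 2 * Real.cos (2 * θ) / 4 ≤ 1 / 4 - R * Real.sin θ / 2 := by
  have hs2 : (0:ℝ) < Real.sqrt 2 := by positivity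
  have hs22 : (Real.sqrt 2) ^ 2 = 2 := Real.sq_sqrt (by norm_num)
  have hR0 : (0:ℝ) < R := lt_trans (by positivity) hR
  have hRs2 : 1 < R * Real.sqrt 2 := by
    rw [div_lt_iff₀ hs2] at hR; linarith
  set x := 1 / (R * Real.sqrt 2) with hx
  have hx0 : 0 < x := by positivity
  have hx1 : x ≤ 1 := by
    rw [hx, div_le_one (by linarith)]; linarith
  have hx2 : x ^ 2 = 1 / (2 * R ^ 2) := by
    rw [hx]; rw [div_pow, mul_pow, hs22]; ring_nf
  set φ := Real.arccos x with hφ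
  have hφ0 : 0 ≤ φ := Real.arccos_nonneg x
  have hπ : (0:ℝ) < π := Real.pi_pos
  have hsum2 : θ + φ ≤ π / 4 := by linarith
  have hcos : Real.cos (π/4) ≤ Real.cos (θ + φ) :=
    Real.cos_le_cos_of_nonneg_of_le_pi (by linarith) (by linarith) hsum2
  rw [Real.cos_pi_div_four, Real.cos_add, Real.cos_arccos (by linarith) hx1,
    Real.sin_arccos] at hcos
  set c := Real.cos θ
  set s := Real.sin θ
  set t := Real.sqrt (2 * R ^ 2 - 1) with htdef
  have hR2 : 1 / 2 < R ^ 2 := by nlinarith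
  have ht0 : 0 ≤ t := Real.sqrt_nonneg _
  have ht2 : t ^ 2 = 2 * R ^ 2 - 1 := Real.sq_sqrt (by linarith)
  have hx2n : 0 ≤ 1 - x ^ 2 := by nlinarith
  have hts : R * Real.sqrt 2 * Real.sqrt (1 - x ^ 2) = t := by
    have hL : (R * Real.sqrt 2 * Real.sqrt (1 - x ^ 2)) ^ 2 = 2 * R ^ 2 - 1 := by
      rw [mul_pow, mul_pow, hs22, Real.sq_sqrt hx2n, hx2]
      field_simp
    rw [htdef, ← hL, Real.sqrt_sq (by positivity)]
  have hkey : R ≤ c - s * t := by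
    have h := mul_le_mul_of_nonneg_left hcos (le_of_lt (by positivity : (0:ℝ) < R * Real.sqrt 2))
    have hxinv : R * Real.sqrt 2 * x = 1 := by
      rw [hx]; field_simp
    calc R = R * Real.sqrt 2 * (Real.sqrt 2 / 2) := by
            rw [mul_assoc]; rw [show Real.sqrt 2 * (Real.sqrt 2 / 2) = (Real.sqrt 2)^2 / 2 by ring, hs22]; ring
      _ ≤ R * Real.sqrt 2 * (c * x - s * Real.sqrt (1 - x ^ 2)) := h
      _ = c * (R * Real.sqrt 2 * x) - s * (R * Real.sqrt 2 * Real.sqrt (1 - x ^ 2)) := by ring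
      _ = c - s * t := by rw [hxinv, hts]; ring
  have hs0 : 0 ≤ s := Real.sin_nonneg_of_nonneg_of_le_pi hθ0 (by linarith)
  have hc0 : 0 ≤ c := Real.cos_nonneg_of_mem_Icc ⟨by linarith, by linarith⟩
  have hcs : s ^ 2 + c ^ 2 = 1 := Real.sin_sq_add_cos_sq θ
  have hcos2 : Real.cos (2 * θ) = 2 * c ^ 2 - 1 := Real.cos_two_mul θ
  have hst : 0 ≤ s * t := mul_nonneg hs0 ht0
  have hsq : (c - R) ^ 2 ≥ (s * t) ^ 2 := by nlinarith
  have hst2 : (s * t) ^ 2 = (1 - c ^ 2) * (2 * R ^ 2 - 1) := by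
    rw [mul_pow, ht2]; nlinarith [hcs]
  constructor
  · rw [hcos2]; nlinarith [hsq, hst2]
  · rw [hcos2]
    have h2 : 2 * R * R ≤ 2 * R * (c - s * t) :=
      mul_le_mul_of_nonneg_left hkey (by linarith)
    have h1 : (2 * R * s + t) ^ 2 ≤ 1 := by nlinarith [hsq, h2, hcs, ht2, hst2]
    have hu : 2 * R * s + t ≤ 1 := by nlinarith [sq_nonneg (2 * R * s + t - 1)]
    have hprod : 0 ≤ (1 - 2 * R * s - t) * (1 - 2 * R * s + t) :=
      mul_nonneg (by linarith) (by linarith)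
    nlinarith [hprod, hcs, ht2, sq_nonneg s]
end

section
/- Let Π₁ and Π₂ be two projections on a finite-dimensional complex Hilbert space H. Then H decomposes as an orthogonal direct sum H = ⊕_α H_α of subspaces of dimension at most 2 such that each of Π₁, I − Π₁, Π₂, I − Π₂ maps each H_α into itself. -/
/-!
Every nonzero subspace `U` invariant under two idempotents `P` and `Q` (over an algebraically
closed field) contains a nonzero invariant subspace of dimension at most two. Indeed, `U` meets
`range P` or `range (1 - P)` nontrivially, and invariance under `P` is the same as under `1 - P`,
so we may assume the former. Then `P Q` preserves `U ⊓ range P` and has an eigenvector `v`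
there; since `P v = v`, `P (Q v) = c • v` and `Q (Q v) = Q v`, the span of `v` and `Q v` is
invariant. When `P` and `Q` are moreover symmetric, the orthogonal complement of an invariant
subspace inside `U` is again invariant, and induction on `U` yields the orthogonal
decomposition.
-/

open scoped InnerProductSpace
open Module Submodule LinearMap

lemma Submodule.finrank_span_pair_le_two {K V : Type*} [DivisionRing K] [AddCommGroup V]
    [Module K V] (a b : V) : finrank K (span K {a, b}) ≤ 2 := by
  classical
  rw [← Finset.coe_pair]
  exact (finrank_span_finset_le_card _).trans Finset.card_le_two

namespace Module.End

section Ring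

variable {R M : Type*} [Ring R] [AddCommGroup M] [Module R M]

lemma one_sub_mem_invtSubmodule_iff {P : End R M} {p : Submodule R M} :
    p ∈ (1 - P).invtSubmodule ↔ p ∈ P.invtSubmodule := by
  simp only [mem_invtSubmodule_iff_forall_mem_of_mem, LinearMap.sub_apply, one_apply]
  exact forall₂_congr fun x hx => p.sub_mem_iff_right hx

lemma span_pair_mem_invtSubmodule_iff {f : End R M} {a b : M} :
    span R {a, b} ∈ f.invtSubmodule ↔ f a ∈ span R {a, b} ∧ f b ∈ span R {a, b} := by
  simp [mem_invtSubmodule, span_le, Set.insert_subset_iff]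

lemma span_pair_apply_mem_invtSubmodule {Q : End R M} (hQ : IsIdempotentElem Q) (v : M) :
    span R {v, Q v} ∈ Q.invtSubmodule := by
  rw [span_pair_mem_invtSubmodule_iff, ← mul_apply, hQ.eq]
  exact ⟨subset_span (by simp), subset_span (by simp)⟩

lemma span_pair_apply_mem_invtSubmodule_of_mem_range {P Q : End R M} (hP : IsIdempotentElem P)
    {v : M} (hv : v ∈ range P) {c : R} (hc : P (Q v) = c • v) :
    span R {v, Q v} ∈ P.invtSubmodule := by
  rw [span_pair_mem_invtSubmodule_iff, hP.mem_range_iff.mp hv, hc]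
  exact ⟨subset_span (by simp), smul_mem _ _ (subset_span (by simp))⟩

lemma inf_range_ne_bot_or_inf_range_one_sub_ne_bot {P : End R M} {p : Submodule R M}
    (hp : p ∈ P.invtSubmodule) (hne : p ≠ ⊥) : p ⊓ range P ≠ ⊥ ∨ p ⊓ range (1 - P) ≠ ⊥ := by
  obtain ⟨x, hx, hx0⟩ := (Submodule.ne_bot_iff p).mp hne
  by_cases h : P x = 0
  · exact .inr <| (Submodule.ne_bot_iff _).mpr ⟨x, ⟨hx, x, by simp [h]⟩, hx0⟩
  · exact .inl <| (Submodule.ne_bot_iff _).mpr ⟨P x, ⟨hp hx, x, rfl⟩, h⟩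

end Ring

section AlgClosed

variable {K V : Type*} [Field K] [IsAlgClosed K] [AddCommGroup V] [Module K V]
  [FiniteDimensional K V] {P Q : End K V} {U : Submodule K V}

lemma exists_le_finrank_le_two_mem_invtSubmodule_of_inf_range_ne_bot (hP : IsIdempotentElem P)
    (hQ : IsIdempotentElem Q) (hU : U ∈ P.invtSubmodule ⊓ Q.invtSubmodule)
    (hUP : U ⊓ range P ≠ ⊥) :
    ∃ W ≤ U, W ≠ ⊥ ∧ finrank K W ≤ 2 ∧ W ∈ P.invtSubmodule ⊓ Q.invtSubmodule := by
  obtain ⟨hUP', hUQ⟩ := Sublattice.mem_inf.mp hU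
  have hS : U ⊓ range P ∈ (P * Q).invtSubmodule := fun x hx => ⟨hUP' (hUQ hx.1), Q x, rfl⟩
  have : Nontrivial ↥(U ⊓ range P) := nontrivial_iff_ne_bot.mpr hUP
  obtain ⟨c, hc⟩ := exists_eigenvalue ((P * Q).restrict hS)
  obtain ⟨v, hv⟩ := hc.exists_hasEigenvector
  have hPQv : P (Q v) = c • (v : V) := congr_arg Subtype.val hv.apply_eq_smul
  refine ⟨span K {(v : V), Q v}, span_le.mpr ?_, (Submodule.ne_bot_iff _).mpr ?_,
    finrank_span_pair_le_two _ _, Sublattice.mem_inf.mpr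
      ⟨span_pair_apply_mem_invtSubmodule_of_mem_range hP v.2.2 hPQv,
        span_pair_apply_mem_invtSubmodule hQ _⟩⟩
  · exact Set.insert_subset_iff.mpr ⟨v.2.1, Set.singleton_subset_iff.mpr (hUQ v.2.1)⟩
  · exact ⟨v, subset_span (by simp), by simpa using hv.2⟩

lemma exists_le_finrank_le_two_mem_invtSubmodule (hP : IsIdempotentElem P)
    (hQ : IsIdempotentElem Q) (hU : U ∈ P.invtSubmodule ⊓ Q.invtSubmodule) (hne : U ≠ ⊥) :
    ∃ W ≤ U, W ≠ ⊥ ∧ finrank K W ≤ 2 ∧ W ∈ P.invtSubmodule ⊓ Q.invtSubmodule := by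
  have h_one_sub : ∀ W : Submodule K V, W ∈ (1 - P).invtSubmodule ⊓ Q.invtSubmodule ↔
      W ∈ P.invtSubmodule ⊓ Q.invtSubmodule := by
    simp [Sublattice.mem_inf, one_sub_mem_invtSubmodule_iff]
  rcases inf_range_ne_bot_or_inf_range_one_sub_ne_bot (Sublattice.mem_inf.mp hU).1 hne with h | h
  · exact exists_le_finrank_le_two_mem_invtSubmodule_of_inf_range_ne_bot hP hQ hU h
  · simpa only [h_one_sub] using exists_le_finrank_le_two_mem_invtSubmodule_of_inf_range_ne_bot
      hP.one_sub hQ ((h_one_sub U).mpr hU) h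

end AlgClosed

end Module.End

section InnerProduct

open Module.End

variable {H : Type*} [NormedAddCommGroup H] [InnerProductSpace ℂ H] {P Q : End ℂ H}

lemma LinearMap.IsSymmetric.orthogonal_mem_invtSubmodule_inf (hP : P.IsSymmetric)
    (hQ : Q.IsSymmetric) {U : Submodule ℂ H} (hU : U ∈ P.invtSubmodule ⊓ Q.invtSubmodule) :
    Uᗮ ∈ P.invtSubmodule ⊓ Q.invtSubmodule :=
  Sublattice.mem_inf.mpr ⟨hP.orthogonalComplement_mem_invtSubmodule (Sublattice.mem_inf.mp hU).1,
    hQ.orthogonalComplement_mem_invtSubmodule (Sublattice.mem_inf.mp hU).2⟩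

variable [FiniteDimensional ℂ H]

lemma exists_finset_pairwise_isOrtho_sSup_eq_finrank_le_two (hPs : P.IsSymmetric)
    (hQs : Q.IsSymmetric) (hP : IsIdempotentElem P) (hQ : IsIdempotentElem Q)
    (U : Submodule ℂ H) (hU : U ∈ P.invtSubmodule ⊓ Q.invtSubmodule) :
    ∃ S : Finset (Submodule ℂ H), (S : Set (Submodule ℂ H)).Pairwise IsOrtho ∧
      sSup (S : Set (Submodule ℂ H)) = U ∧
      ∀ W ∈ S, finrank ℂ W ≤ 2 ∧ W ∈ P.invtSubmodule ⊓ Q.invtSubmodule := by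
  induction U using WellFoundedLT.induction with
  | ind U ih =>
  by_cases hne : U = ⊥
  · exact ⟨∅, by simp, by simp [hne], by simp⟩
  obtain ⟨W, hWU, hW, hWr, hWinv⟩ := exists_le_finrank_le_two_mem_invtSubmodule hP hQ hU hne
  have hlt : Wᗮ ⊓ U < U := inf_le_right.lt_of_ne fun h =>
    hW ((orthogonal_disjoint W).eq_bot_of_le (hWU.trans (h ▸ inf_le_left)))
  obtain ⟨S, hS, hSsup, hSW⟩ := ih _ hlt <|
    Sublattice.inf_mem (hPs.orthogonal_mem_invtSubmodule_inf hQs hWinv) hU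
  refine ⟨insert W S, ?_, ?_, ?_⟩
  · have hWS : ∀ b ∈ S, W ⟂ b := fun b hb =>
      (isOrtho_orthogonal_right W).mono_right ((le_sSup hb).trans (hSsup ▸ inf_le_left))
    rw [Finset.coe_insert, Set.pairwise_insert]
    exact ⟨hS, fun b hb _ => ⟨hWS b hb, (hWS b hb).symm⟩⟩
  · rw [Finset.coe_insert, sSup_insert, hSsup, sup_orthogonal_inf_of_hasOrthogonalProjection hWU]
  · exact Finset.forall_mem_insert _ _ _ |>.mpr ⟨⟨hWr, hWinv⟩, hSW⟩

end InnerProduct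

open Module.End in
/-- Jordan's lemma for two projections: the space decomposes into an
orthogonal direct sum of subspaces of dimension at most 2, each invariant under
`P₁`, `1 − P₁`, `P₂` and `1 − P₂`. -/
theorem jordan_two_projections (H : Type*) [NormedAddCommGroup H]
    [InnerProductSpace ℂ H] [FiniteDimensional ℂ H]
    (P₁ P₂ : H →ₗ[ℂ] H) (hs₁ : P₁.IsSymmetric) (hs₂ : P₂.IsSymmetric)
    (hi₁ : P₁ ∘ₗ P₁ = P₁) (hi₂ : P₂ ∘ₗ P₂ = P₂) :
    ∃ (ι : Type) (_ : Fintype ι) (_ : DecidableEq ι) (V : ι → Submodule ℂ H),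
      DirectSum.IsInternal V ∧
      (∀ α β, α ≠ β → ∀ x ∈ V α, ∀ y ∈ V β, ⟪x, y⟫_ℂ = 0) ∧
      (∀ α, Module.finrank ℂ (V α) ≤ 2) ∧
      (∀ α, ∀ x ∈ V α,
        P₁ x ∈ V α ∧ x - P₁ x ∈ V α ∧
        P₂ x ∈ V α ∧ x - P₂ x ∈ V α) := by
  obtain ⟨S, hS, hSsup, hSW⟩ :=
    exists_finset_pairwise_isOrtho_sSup_eq_finrank_le_two hs₁ hs₂ hi₁ hi₂ ⊤
      (Sublattice.mem_inf.mpr ⟨invtSubmodule.top_mem _, invtSubmodule.top_mem _⟩)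
  let e := S.equivFin.symm
  let V : Fin S.card → Submodule ℂ H := fun i => e i
  have hV : Pairwise fun i j => V i ⟂ V j := fun i j hij =>
    hS (e i).2 (e j).2 (Subtype.val_injective.ne (e.injective.ne hij))
  have hVsup : iSup V = ⊤ := by
    rw [← hSsup, sSup_eq_iSup']
    exact Equiv.iSup_comp (g := fun W : ↥S => (W : Submodule ℂ H)) e
  refine ⟨Fin S.card, inferInstance, inferInstance, V,
    DirectSum.isInternal_submodule_of_iSupIndep_of_iSup_eq_top
      (OrthogonalFamily.of_pairwise hV).independent hVsup,
    fun α β h => isOrtho_iff_inner_eq.mp (hV h), fun α => (hSW _ (e α).2).1, fun α x hx => ?_⟩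
  obtain ⟨h₁, h₂⟩ := Sublattice.mem_inf.mp (hSW _ (e α).2).2
  exact ⟨h₁ hx, sub_mem hx (h₁ hx), h₂ hx, sub_mem hx (h₂ hx)⟩
end

section
/- Let A₁ and A₂ be two Hermitian operators on a finite-dimensional Hilbert space H with A₁² = A₂² = I (i.e., eigenvalues ±1). Then H decomposes as an orthogonal direct sum of A₁- and A₂-invariant subspaces each of dimension at most 2. -/
/-!
If `u` is an eigenvector of `A₁ + A₂` with eigenvalue `μ`, then `A₂ u = μ u - A₁ u`, so
`span {u, A₁ u} = span {u, A₂ u}`; as `A₁` and `A₂` are involutions, this span of dimension at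
most `2` is invariant under both. Since `A₁` and `A₂` are self-adjoint, the orthogonal complement
of such a block inside an invariant subspace is again invariant, and well-founded induction on
invariant subspaces splits `H` into orthogonal blocks.
-/

open scoped InnerProductSpace

open Module Module.End Submodule

namespace Submodule

variable {R M : Type*} [Ring R] [AddCommGroup M] [Module R M]

theorem span_pair_le_span_pair_of_add_eq_smul {u v w : M} {c : R} (h : v + w = c • u) :
    span R {u, v} ≤ span R {u, w} := by
  rw [span_le, Set.insert_subset_iff, Set.singleton_subset_iff, eq_sub_of_add_eq h]
  exact ⟨subset_span (by simp),
    sub_mem (smul_mem _ _ (subset_span (by simp))) (subset_span (by simp))⟩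

theorem span_pair_eq_span_pair_of_add_eq_smul {u v w : M} {c : R} (h : v + w = c • u) :
    span R {u, v} = span R {u, w} :=
  le_antisymm (span_pair_le_span_pair_of_add_eq_smul h)
    (span_pair_le_span_pair_of_add_eq_smul (add_comm w v ▸ h))

end Submodule

namespace Module.End

theorem span_pair_apply_mem_invtSubmodule_s5 {R M : Type*} [Semiring R] [AddCommMonoid M]
    [Module R M] {A : End R M} (hA : Function.Involutive A) (u : M) :
    span R {u, A u} ∈ A.invtSubmodule := by
  rw [mem_invtSubmodule_iff_map_le, map_span, Set.image_pair, hA u, Set.pair_comm]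

variable {K V : Type*} [Field K] [AddCommGroup V] [Module K V] [FiniteDimensional K V]

theorem exists_hasEigenvector_mem_of_mem_invtSubmodule [IsAlgClosed K] {f : End K V}
    {W : Submodule K V} (hW : W ∈ f.invtSubmodule) (hW0 : W ≠ ⊥) :
    ∃ μ, ∃ u ∈ W, f.HasEigenvector μ u := by
  have : Nontrivial W := nontrivial_iff_ne_bot.mpr hW0
  obtain ⟨μ, hμ⟩ := exists_eigenvalue (f.restrict hW)
  obtain ⟨w, hw⟩ := hμ.exists_hasEigenvector
  refine ⟨μ, w, w.2, hasEigenvector_iff.mpr ⟨?_, by simpa using hw.2⟩⟩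
  exact mem_eigenspace_iff.mpr (congrArg Subtype.val (mem_eigenspace_iff.mp hw.1))

theorem exists_le_mem_invtSubmodule_inf_finrank_le_two [IsAlgClosed K] {A₁ A₂ : End K V}
    (h₁ : Function.Involutive A₁) (h₂ : Function.Involutive A₂) {W : Submodule K V}
    (hW : W ∈ A₁.invtSubmodule ⊓ A₂.invtSubmodule) (hW0 : W ≠ ⊥) :
    ∃ U ∈ A₁.invtSubmodule ⊓ A₂.invtSubmodule, U ≤ W ∧ U ≠ ⊥ ∧ finrank K U ≤ 2 := by
  obtain ⟨μ, u, huW, hu⟩ := exists_hasEigenvector_mem_of_mem_invtSubmodule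
    (invtSubmodule_inf_invtSubmodule_le_invtSubmodule_add A₁ A₂ hW) hW0
  have hspan : span K {u, A₁ u} = span K {u, A₂ u} :=
    span_pair_eq_span_pair_of_add_eq_smul hu.apply_eq_smul
  refine ⟨span K {u, A₁ u}, ⟨span_pair_apply_mem_invtSubmodule_s5 h₁ u,
    hspan ▸ span_pair_apply_mem_invtSubmodule_s5 h₂ u⟩, ?_, ?_, ?_⟩
  · rw [span_le, Set.insert_subset_iff, Set.singleton_subset_iff]
    exact ⟨huW, hW.1 huW⟩
  · exact (Submodule.ne_bot_iff _).mpr ⟨u, subset_span (by simp), hu.2⟩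
  · classical
    have := finrank_span_finset_le_card (R := K) {u, A₁ u}
    rw [Finset.coe_pair] at this
    exact this.trans Finset.card_le_two

end Module.End

namespace Submodule

variable {𝕜 E : Type*} [RCLike 𝕜] [NormedAddCommGroup E] [InnerProductSpace 𝕜 E]
  [FiniteDimensional 𝕜 E]

theorem exists_finset_pairwise_isOrtho_sSup_eq {L : Set (Submodule 𝕜 E)} {k : ℕ}
    (hL : ∀ W ∈ L, ∀ U ∈ L, U ≤ W → Uᗮ ⊓ W ∈ L)
    (hblock : ∀ W ∈ L, W ≠ ⊥ → ∃ U ∈ L, U ≤ W ∧ U ≠ ⊥ ∧ finrank 𝕜 U ≤ k)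
    {W : Submodule 𝕜 E} (hW : W ∈ L) :
    ∃ s : Finset (Submodule 𝕜 E), sSup ↑s = W ∧ (s : Set (Submodule 𝕜 E)).Pairwise IsOrtho ∧
      ∀ U ∈ s, U ∈ L ∧ finrank 𝕜 U ≤ k := by
  classical
  induction W using WellFoundedLT.induction with
  | ind W ih =>
  rcases eq_or_ne W ⊥ with rfl | hW0
  · exact ⟨∅, by simp, by simp, by simp⟩
  obtain ⟨U, hUL, hUW, hU0, hUk⟩ := hblock W hW hW0
  have hlt : Uᗮ ⊓ W < W := by
    refine inf_le_right.lt_of_ne fun h => hU0 ?_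
    rw [eq_bot_iff, ← inf_orthogonal_eq_bot U]
    exact le_inf le_rfl (hUW.trans (h ▸ inf_le_left))
  obtain ⟨s, hs, hsorth, hsL⟩ := ih _ hlt (hL W hW U hUL hUW)
  have hUs : ∀ V ∈ s, U ⟂ V := isOrtho_sSup_right.mp <|
    hs ▸ (isOrtho_orthogonal_right U).mono_right inf_le_left
  refine ⟨insert U s, ?_, ?_, ?_⟩
  · rw [Finset.coe_insert, sSup_insert, hs, sup_orthogonal_inf_of_hasOrthogonalProjection hUW]
  · rw [Finset.coe_insert]
    exact hsorth.insert fun V hV _ => ⟨hUs V hV, (hUs V hV).symm⟩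
  · exact Finset.forall_mem_insert _ _ _ |>.mpr ⟨⟨hUL, hUk⟩, hsL⟩

end Submodule

/-- Jordan's lemma for two ±1-valued observables: the space decomposes
into an orthogonal direct sum of subspaces of dimension at most 2, each invariant
under both `A₁` and `A₂`. -/
theorem jordan_two_observables (H : Type*) [NormedAddCommGroup H]
    [InnerProductSpace ℂ H] [FiniteDimensional ℂ H]
    (A₁ A₂ : H →ₗ[ℂ] H) (hs₁ : A₁.IsSymmetric) (hs₂ : A₂.IsSymmetric)
    (hi₁ : A₁ ∘ₗ A₁ = LinearMap.id) (hi₂ : A₂ ∘ₗ A₂ = LinearMap.id) :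
    ∃ (ι : Type) (_ : Fintype ι) (_ : DecidableEq ι) (V : ι → Submodule ℂ H),
      DirectSum.IsInternal V ∧
      (∀ α β, α ≠ β → ∀ x ∈ V α, ∀ y ∈ V β, ⟪x, y⟫_ℂ = 0) ∧
      (∀ α, Module.finrank ℂ (V α) ≤ 2) ∧
      (∀ α, ∀ x ∈ V α, A₁ x ∈ V α ∧ A₂ x ∈ V α) := by
  let L : Set (Submodule ℂ H) := ↑(invtSubmodule A₁ ⊓ invtSubmodule A₂)
  have hL : ∀ W ∈ L, ∀ U ∈ L, U ≤ W → Uᗮ ⊓ W ∈ L := fun W hW U hU _ =>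
    ⟨invtSubmodule.inf_mem (hs₁.orthogonalComplement_mem_invtSubmodule hU.1) hW.1,
      invtSubmodule.inf_mem (hs₂.orthogonalComplement_mem_invtSubmodule hU.2) hW.2⟩
  obtain ⟨s, hs, hsorth, hsL⟩ := exists_finset_pairwise_isOrtho_sSup_eq hL
    (fun W => exists_le_mem_invtSubmodule_inf_finrank_le_two (LinearMap.congr_fun hi₁)
      (LinearMap.congr_fun hi₂))
    (⟨invtSubmodule.top_mem A₁, invtSubmodule.top_mem A₂⟩ : ⊤ ∈ L)
  -- `ι` must live in `Type`, unlike `Submodule ℂ H`, so `s` is reindexed by `Fin s.card`.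
  let V : Fin s.card → Submodule ℂ H := fun i => s.equivFin.symm i
  have hVL : ∀ i, V i ∈ L ∧ finrank ℂ (V i) ≤ 2 := fun i => hsL _ (s.equivFin.symm i).2
  have hV : OrthogonalFamily ℂ (fun i => V i) fun i => (V i).subtypeₗᵢ :=
    .of_pairwise fun i j hij =>
      hsorth (s.equivFin.symm i).2 (s.equivFin.symm j).2 (by simpa [V] using hij)
  have hVtop : iSup V = ⊤ := by
    rw [← hs, sSup_eq_iSup']
    exact s.equivFin.symm.iSup_comp (g := fun U : s => (U : Submodule ℂ H))
  refine ⟨Fin s.card, inferInstance, inferInstance, V,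
    (DirectSum.isInternal_submodule_iff_iSupIndep_and_iSup_eq_top V).mpr ⟨hV.independent, hVtop⟩,
    fun i j hij x hx y hy => hV hij ⟨x, hx⟩ ⟨y, hy⟩, fun i => (hVL i).2,
    fun i x hx => ⟨(hVL i).1.1 hx, (hVL i).1.2 hx⟩⟩
end

section
/- Let {Π_{0|0}, Π_{1|0}} and {Π_{0|1}, Π_{1|1}} be two rank-one projective measurements on a 2-dimensional complex Hilbert space. Then there exists an orthonormal basis {e₁, e₂} such that all matrix elements ⟨e_l| Π_{i|j} |e_k⟩ are real. -/
/-!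
Diagonalize the first projector in an orthonormal eigenbasis: its matrix is then real. Multiplying
the second basis vector by a phase keeps the first matrix diagonal and can make the off-diagonal
entry `⟨e₀|Π|e₁⟩` of the second projector real; since that matrix is Hermitian, all of its entries
are then real. The complementary projectors `1 - Π` inherit real matrices.
-/

open Matrix

theorem Complex.exists_mem_unitary_im_mul_eq_zero (z : ℂ) : ∃ c ∈ unitary ℂ, (c * z).im = 0 := by
  refine ⟨exp (↑(-z.arg) * I), ?_, ?_⟩
  · rw [Unitary.mem_iff_self_mul_star, star_def, mul_conj, normSq_eq_norm_sq,
      norm_exp_ofReal_mul_I]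
    norm_num
  · have hpolar := norm_mul_exp_arg_mul_I z
    set θ := z.arg
    rw [← hpolar, mul_left_comm, ← exp_add, ofReal_neg, neg_mul, neg_add_cancel, exp_zero, mul_one,
      ofReal_im]

namespace Matrix

variable {m n : Type*}

def HasRealEntries (M : Matrix m n ℂ) : Prop := ∀ i j, (M i j).im = 0

theorem hasRealEntries_one [DecidableEq n] : HasRealEntries (1 : Matrix n n ℂ) := by
  intro i j
  rw [one_apply]
  split_ifs <;> simp

theorem HasRealEntries.sub {M N : Matrix m n ℂ} (hM : M.HasRealEntries) (hN : N.HasRealEntries) :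
    (M - N).HasRealEntries := fun i j => by simp [hM i j, hN i j]

theorem hasRealEntries_diagonal_ofReal [DecidableEq n] (r : n → ℝ) :
    HasRealEntries (diagonal (Complex.ofReal ∘ r)) := by
  intro i j
  rw [diagonal_apply]
  split_ifs <;> simp

theorem diagonal_mem_unitaryGroup [Fintype n] [DecidableEq n] {d : n → ℂ}
    (hd : ∀ i, d i ∈ unitary ℂ) : diagonal d ∈ unitaryGroup n ℂ := by
  rw [mem_unitaryGroup_iff', star_eq_conjTranspose, diagonal_conjTranspose, diagonal_mul_diagonal,
    ← diagonal_one]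
  exact congrArg diagonal (funext fun i => Unitary.star_mul_self_of_mem (hd i))

theorem star_transpose_dotProduct_mulVec_transpose [Fintype n] (U M : Matrix n n ℂ) (l k : n) :
    star (Uᵀ l) ⬝ᵥ (M *ᵥ Uᵀ k) = (star U * M * U) l k := by
  rw [Matrix.mul_assoc, mul_apply']
  rfl

theorem HasRealEntries.star_mul_one_sub_mul [Fintype n] [DecidableEq n] {U M : Matrix n n ℂ}
    (hU : U ∈ unitaryGroup n ℂ) (hM : (star U * M * U).HasRealEntries) :
    (star U * (1 - M) * U).HasRealEntries := by
  rw [Matrix.mul_sub, Matrix.sub_mul, Matrix.mul_one, Unitary.star_mul_self_of_mem hU]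
  exact hasRealEntries_one.sub hM

theorem IsHermitian.hasRealEntries_of_im_apply_zero_one {B : Matrix (Fin 2) (Fin 2) ℂ}
    (hB : B.IsHermitian) (h01 : (B 0 1).im = 0) : B.HasRealEntries := by
  have hdiag : ∀ i, (B i i).im = 0 := fun i => Complex.conj_eq_iff_im.mp (hB.apply i i)
  have h10 : (B 1 0).im = 0 := by rw [← hB.apply 1 0]; simp [h01]
  intro i j
  fin_cases i <;> fin_cases j
  exacts [hdiag 0, h01, h10, hdiag 1]

theorem IsHermitian.exists_diagonal_mem_unitaryGroup_hasRealEntries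
    {B : Matrix (Fin 2) (Fin 2) ℂ} (hB : B.IsHermitian) :
    ∃ d : Fin 2 → ℂ, diagonal d ∈ unitaryGroup (Fin 2) ℂ ∧
      (star (diagonal d) * B * diagonal d).HasRealEntries := by
  obtain ⟨c, hc, hcB⟩ := Complex.exists_mem_unitary_im_mul_eq_zero (B 0 1)
  refine ⟨![1, c], diagonal_mem_unitaryGroup fun i => ?_, ?_⟩
  · fin_cases i
    exacts [one_mem _, hc]
  · apply (isHermitian_conjTranspose_mul_mul _ hB).hasRealEntries_of_im_apply_zero_one
    simp [diagonal_conjTranspose, mul_comm, hcB]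

theorem IsHermitian.exists_unitary_conj_hasRealEntries {A B : Matrix (Fin 2) (Fin 2) ℂ}
    (hA : A.IsHermitian) (hB : B.IsHermitian) :
    ∃ U ∈ unitaryGroup (Fin 2) ℂ,
      (star U * A * U).HasRealEntries ∧ (star U * B * U).HasRealEntries := by
  set V : Matrix (Fin 2) (Fin 2) ℂ := ↑hA.eigenvectorUnitary
  have hAV : star V * A * V = diagonal (Complex.ofReal ∘ hA.eigenvalues) := by
    simpa [V] using hA.conjStarAlgAut_star_eigenvectorUnitary
  obtain ⟨d, hd, hBd⟩ :=
    (isHermitian_conjTranspose_mul_mul V hB).exists_diagonal_mem_unitaryGroup_hasRealEntries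
  have hconj : ∀ M, star (V * diagonal d) * M * (V * diagonal d) =
      star (diagonal d) * (star V * M * V) * diagonal d := fun M => by
    simp only [star_mul, Matrix.mul_assoc]
  refine ⟨V * diagonal d, mul_mem (SetLike.coe_mem _) hd, ?_, ?_⟩
  · rw [hconj, hAV, (commute_unitary_iff_star_left_conjugate hd).mp (commute_diagonal _ _)]
    exact hasRealEntries_diagonal_ofReal _
  · rwa [hconj]

end Matrix

/-- `P j i` is the projector `Π_{i|j}` (outcome `i`, setting `j`). -/
theorem real_basis_for_two_qubit_measurements_general
    (P : Fin 2 → Fin 2 → Matrix (Fin 2) (Fin 2) ℂ)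
    (hherm : ∀ j i, (P j i).IsHermitian)
    (hsum : ∀ j, P j 0 + P j 1 = 1) :
    ∃ e : Fin 2 → (Fin 2 → ℂ),
      (∀ l k, star (e l) ⬝ᵥ e k = if l = k then 1 else 0) ∧
      (∀ l k j i, (star (e l) ⬝ᵥ (P j i *ᵥ e k)).im = 0) := by
  obtain ⟨U, hU, hA, hB⟩ := (hherm 0 0).exists_unitary_conj_hasRealEntries (hherm 1 0)
  have h0 : ∀ j, (star U * P j 0 * U).HasRealEntries := Fin.forall_fin_two.mpr ⟨hA, hB⟩
  have hreal : ∀ j i, (star U * P j i * U).HasRealEntries := fun j =>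
    Fin.forall_fin_two.mpr ⟨h0 j, by
      rw [eq_sub_of_add_eq' (hsum j)]
      exact (h0 j).star_mul_one_sub_mul hU⟩
  refine ⟨Uᵀ, fun l k => ?_, fun l k j i => ?_⟩
  · rw [← one_mulVec (Uᵀ k), star_transpose_dotProduct_mulVec_transpose, Matrix.mul_one,
      Unitary.star_mul_self_of_mem hU, one_apply]
  · rw [star_transpose_dotProduct_mulVec_transpose]
    exact hreal j i l k

/-- two rank-one projective measurements on ℂ² admit a common
orthonormal basis in which all their matrix elements are real.
`P j i` denotes the projector `Π_{i|j}` (outcome `i`, setting `j`). -/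
theorem real_basis_for_two_qubit_measurements
    (P : Fin 2 → Fin 2 → Matrix (Fin 2) (Fin 2) ℂ)
    (hherm : ∀ j i, (P j i).IsHermitian)
    (hidem : ∀ j i, P j i * P j i = P j i)
    (hrank : ∀ j i, (P j i).rank = 1)
    (hsum : ∀ j, P j 0 + P j 1 = 1) :
    ∃ e : Fin 2 → (Fin 2 → ℂ),
      (∀ l k, star (e l) ⬝ᵥ e k = if l = k then 1 else 0) ∧
      (∀ l k j i, (star (e l) ⬝ᵥ (P j i *ᵥ e k)).im = 0) :=
  real_basis_for_two_qubit_measurements_general P hherm hsum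
end

section
/- Let {Π_{0|0}, Π_{1|0}} and {Π_{0|1}, Π_{1|1}} be two rank-one projective measurements on a 2-dimensional complex Hilbert space. Then there exists a unitary U such that U Π_{j|i} U† = Π_{j⊕1|i} for all i, j ∈ {0,1}. -/
open Matrix

lemma exists_perp (x1 y1 z1 x2 y2 z2 : ℝ) :
    ∃ p q r : ℝ, p^2 + q^2 + r^2 = 1 ∧ x1*p + y1*q + z1*r = 0 ∧ x2*p + y2*q + z2*r = 0 := by
  obtain ⟨k, hk0, hk⟩ : ∃ k : Fin 3 → ℝ, k ≠ 0 ∧ (!![x1,y1,z1;x2,y2,z2]).mulVecLin k = 0 := by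
    by_contra h
    push_neg at h
    have hinj : Function.Injective (!![x1,y1,z1;x2,y2,z2]).mulVecLin := by
      rw [← LinearMap.ker_eq_bot, Submodule.eq_bot_iff]
      intro k hkk
      by_contra hne
      exact h k hne hkk
    have := LinearMap.finrank_le_finrank_of_injective hinj
    simp [Module.finrank_pi] at this
  have h1 := congrFun hk 0
  have h2 := congrFun hk 1
  simp [Matrix.mulVecLin_apply, Matrix.mulVec, dotProduct, Fin.sum_univ_three] at h1 h2
  have hpos : 0 < k 0 ^ 2 + k 1 ^ 2 + k 2 ^ 2 := by
    rcases Function.ne_iff.mp hk0 with ⟨i, hi⟩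
    simp only [Pi.zero_apply] at hi
    have hsq := sq_pos_of_ne_zero hi
    fin_cases i
    · nlinarith [sq_nonneg (k 1), sq_nonneg (k 2), show (0:ℝ) < k 0 ^ 2 from hsq]
    · nlinarith [sq_nonneg (k 0), sq_nonneg (k 2), show (0:ℝ) < k 1 ^ 2 from hsq]
    · nlinarith [sq_nonneg (k 0), sq_nonneg (k 1), show (0:ℝ) < k 2 ^ 2 from hsq]
  set s : ℝ := Real.sqrt (k 0 ^ 2 + k 1 ^ 2 + k 2 ^ 2) with hs
  have hspos : 0 < s := Real.sqrt_pos.mpr hpos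
  have hssne : s ≠ 0 := ne_of_gt hspos
  have hs2 : s ^ 2 = k 0 ^ 2 + k 1 ^ 2 + k 2 ^ 2 := Real.sq_sqrt hpos.le
  refine ⟨k 0 / s, k 1 / s, k 2 / s, ?_, ?_, ?_⟩
  · field_simp
    linarith [hs2]
  · field_simp
    linear_combination h1
  · field_simp
    linear_combination h2

lemma trace_one (A : Matrix (Fin 2) (Fin 2) ℂ) (hA : A.IsHermitian)
    (h2 : A * A = A) (hr : A.rank = 1) : A 1 1 = 1 - A 0 0 := by
  have e00 : A 0 0 * A 0 0 + A 0 1 * A 1 0 = A 0 0 := by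
    simpa [Matrix.mul_apply, Fin.sum_univ_two] using congrFun (congrFun h2 0) 0
  have e11 : A 1 0 * A 0 1 + A 1 1 * A 1 1 = A 1 1 := by
    simpa [Matrix.mul_apply, Fin.sum_univ_two] using congrFun (congrFun h2 1) 1
  have e01 : A 0 0 * A 0 1 + A 0 1 * A 1 1 = A 0 1 := by
    simpa [Matrix.mul_apply, Fin.sum_univ_two] using congrFun (congrFun h2 0) 1
  by_cases ht : A 0 0 + A 1 1 - 1 = 0
  · linear_combination ht
  · exfalso
    have hd : (A 0 0 - A 1 1) * (A 0 0 + A 1 1 - 1) = 0 := by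
      linear_combination e00 - e11
    have had : A 0 0 = A 1 1 := by
      rcases mul_eq_zero.mp hd with h | h
      · linear_combination h
      · exact absurd h ht
    have hb : A 0 1 = 0 := by
      have : A 0 1 * (A 0 0 + A 1 1 - 1) = 0 := by linear_combination e01
      rcases mul_eq_zero.mp this with h | h
      · exact h
      · exact absurd h ht
    have hb' : A 1 0 = 0 := by
      rw [← hA.apply 1 0, hb, star_zero]
    have hsq : A 0 0 * (A 0 0 - 1) = 0 := by
      linear_combination e00 - A 1 0 * hb
    rcases mul_eq_zero.mp hsq with h | h
    · -- A = 0
      have hAz : A = 0 := by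
        ext i j
        fin_cases i <;> fin_cases j <;>
          simp_all
      rw [hAz, Matrix.rank_zero] at hr
      exact absurd hr one_ne_zero.symm
    · -- A = 1
      have hA1 : A = 1 := by
        ext i j
        have h00 : A 0 0 = 1 := by linear_combination h
        have h11 : A 1 1 = 1 := by rw [← had]; exact h00
        fin_cases i <;> fin_cases j <;> simp_all [Matrix.one_apply]
      rw [hA1, Matrix.rank_one] at hr
      simp at hr

lemma U_mul_U (p q r : ℝ) (hn : p^2 + q^2 + r^2 = 1) :
    (!![(r:ℂ), (p:ℂ) - q*Complex.I; (p:ℂ) + q*Complex.I, -r] : Matrix (Fin 2) (Fin 2) ℂ) *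
      !![(r:ℂ), (p:ℂ) - q*Complex.I; (p:ℂ) + q*Complex.I, -r] = 1 := by
  have hnC : (p:ℂ)^2 + (q:ℂ)^2 + (r:ℂ)^2 = 1 := by exact_mod_cast hn
  ext i j
  fin_cases i <;> fin_cases j <;>
    simp [Matrix.mul_apply, Fin.sum_univ_two, Matrix.one_apply]
  · linear_combination hnC - (q:ℂ)^2 * Complex.I_sq
  · ring
  · ring
  · linear_combination hnC - (q:ℂ)^2 * Complex.I_sq

lemma flip_lemma (p q r ar br bi : ℝ) (hn : p^2 + q^2 + r^2 = 1)
    (hperp : br*p + (-bi)*q + (ar - 1/2)*r = 0) :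
    (!![(r:ℂ), (p:ℂ) - q*Complex.I; (p:ℂ) + q*Complex.I, -r] : Matrix (Fin 2) (Fin 2) ℂ) *
      !![(ar:ℂ), (br:ℂ) + bi*Complex.I; (br:ℂ) - bi*Complex.I, 1 - ar] *
      !![(r:ℂ), (p:ℂ) - q*Complex.I; (p:ℂ) + q*Complex.I, -r] =
      1 - !![(ar:ℂ), (br:ℂ) + bi*Complex.I; (br:ℂ) - bi*Complex.I, 1 - ar] := by
  have hnC : (p:ℂ)^2 + (q:ℂ)^2 + (r:ℂ)^2 = 1 := by exact_mod_cast hn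
  have hpC : (br:ℂ)*p - bi*q + (ar - 1/2)*r = 0 := by
    have := congrArg (Complex.ofReal) hperp
    push_cast at this
    linear_combination this
  ext i j
  fin_cases i <;> fin_cases j <;>
    simp [Matrix.mul_apply, Fin.sum_univ_two, Matrix.one_apply, Matrix.sub_apply]
  · linear_combination (1-(ar:ℂ))*hnC + 2*(r:ℂ)*hpC +
      (2*(q:ℂ)*r*bi - q^2 + q^2*ar)*Complex.I_sq
  · linear_combination (-((br:ℂ) + bi*Complex.I))*hnC + 2*((p:ℂ) - q*Complex.I)*hpC +
      (-(q:ℂ)^2*bi*Complex.I + q^2*br + 2*p*q*bi)*Complex.I_sq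
  · linear_combination (-((br:ℂ) - bi*Complex.I))*hnC + 2*((p:ℂ) + q*Complex.I)*hpC +
      ((q:ℂ)^2*bi*Complex.I + q^2*br + 2*p*q*bi)*Complex.I_sq
  · linear_combination (ar:ℂ)*hnC - 2*(r:ℂ)*hpC +
      (-2*(q:ℂ)*r*bi - q^2*ar)*Complex.I_sq

/-- for two rank-one projective measurements on ℂ² there is a unitary
`U` swapping the two outcomes of each measurement: `U Π_{j|i} U† = Π_{j⊕1|i}`.
`P i j` denotes the projector `Π_{j|i}` (setting `i`, outcome `j`). -/
theorem unitary_flipping_outcomes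
    (P : Fin 2 → Fin 2 → Matrix (Fin 2) (Fin 2) ℂ)
    (hherm : ∀ i j, (P i j).IsHermitian)
    (hidem : ∀ i j, P i j * P i j = P i j)
    (hrank : ∀ i j, (P i j).rank = 1)
    (hsum : ∀ i, P i 0 + P i 1 = 1) :
    ∃ U : Matrix (Fin 2) (Fin 2) ℂ,
      U * Uᴴ = 1 ∧ Uᴴ * U = 1 ∧
      ∀ i j, U * P i j * Uᴴ = P i (j + 1) := by
  have hP1 : ∀ i, P i 1 = 1 - P i 0 := fun i => eq_sub_of_add_eq' (hsum i)
  have key : ∀ i : Fin 2, ∃ ar br bi : ℝ,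
      P i 0 = !![(ar:ℂ), (br:ℂ) + bi*Complex.I; (br:ℂ) - bi*Complex.I, 1 - ar] := by
    intro i
    refine ⟨(P i 0 0 0).re, (P i 0 0 1).re, (P i 0 0 1).im, ?_⟩
    have h00 : ((P i 0 0 0).re : ℂ) = P i 0 0 0 :=
      Complex.conj_eq_iff_re.mp ((hherm i 0).apply 0 0)
    have h01 : ((P i 0 0 1).re : ℂ) + (P i 0 0 1).im * Complex.I = P i 0 0 1 :=
      Complex.re_add_im _
    have h10 : ((P i 0 0 1).re : ℂ) - (P i 0 0 1).im * Complex.I = P i 0 1 0 := by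
      rw [← (hherm i 0).apply 1 0]
      rw [← h01]
      simp [Complex.ext_iff]
    have h11 : P i 0 1 1 = 1 - P i 0 0 0 :=
      trace_one (P i 0) (hherm i 0) (hidem i 0) (hrank i 0)
    ext a b
    fin_cases a <;> fin_cases b <;>
      simp [Matrix.one_apply]
    · exact h00.symm
    · exact h10.symm
    · linear_combination h11 + h00
  obtain ⟨a0, b0r, b0i, hA0⟩ := key 0
  obtain ⟨a1, b1r, b1i, hA1⟩ := key 1
  obtain ⟨p, q, r, hn, hperp0, hperp1⟩ :=
    exists_perp b0r (-b0i) (a0 - 1/2) b1r (-b1i) (a1 - 1/2)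
  set U : Matrix (Fin 2) (Fin 2) ℂ :=
    !![(r:ℂ), (p:ℂ) - q*Complex.I; (p:ℂ) + q*Complex.I, -r] with hUdef
  have hUH : Uᴴ = U := by
    ext i j
    fin_cases i <;> fin_cases j <;>
      simp [hUdef, Matrix.conjTranspose_apply, Complex.ext_iff]
  have hUU : U * U = 1 := U_mul_U p q r hn
  have h0 : U * P 0 0 * U = 1 - P 0 0 := by
    rw [hA0]; exact flip_lemma p q r a0 b0r b0i hn hperp0
  have h1 : U * P 1 0 * U = 1 - P 1 0 := by
    rw [hA1]; exact flip_lemma p q r a1 b1r b1i hn hperp1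
  have hflip : ∀ i : Fin 2, U * P i 0 * U = 1 - P i 0 := by
    intro i
    fin_cases i
    · exact h0
    · exact h1
  refine ⟨U, ?_, ?_, ?_⟩
  · rw [hUH]; exact hUU
  · rw [hUH]; exact hUU
  · intro i j
    rw [hUH]
    fin_cases j
    · show U * P i 0 * U = P i 1
      rw [hP1 i]; exact hflip i
    · show U * P i 1 * U = P i 0
      rw [hP1 i, Matrix.mul_sub, Matrix.mul_one, Matrix.sub_mul, hUU, hflip i, sub_sub_cancel]
end

section
/- Define S(R, θ, α₀, α₁, β₀, β₁) = 1/2 + (R cos θ/8)·(cos(2(α₀−β₀)) + cos(2(α₀−β₁)) + cos(2(α₁−β₀)) − cos(2(α₁−β₁))) + (R sin θ/8)·(cos(2(α₀+β₀)) + cos(2(α₀+β₁)) + cos(2(α₁+β₀)) − cos(2(α₁+β₁))). Then for all real α₀, α₁, β₀, β₁ and all R ≥ 0, θ ∈ ℝ: S ≤ 1/2 + R/(2√2). Moreover for each R and θ there exist α₀, α₁, β₀, β₁ achieving equality. -/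
open Real

/-- The CHSH score of a Bell-diagonal state with parameters `R`, `θ` and qubit
measurement angles `α₀, α₁` (Alice) and `β₀, β₁` (Bob). -/
noncomputable def chshScore (R θ α₀ α₁ β₀ β₁ : ℝ) : ℝ :=
  1 / 2 +
    R * Real.cos θ / 8 *
      (Real.cos (2 * (α₀ - β₀)) + Real.cos (2 * (α₀ - β₁)) +
        Real.cos (2 * (α₁ - β₀)) - Real.cos (2 * (α₁ - β₁))) +
    R * Real.sin θ / 8 *
      (Real.cos (2 * (α₀ + β₀)) + Real.cos (2 * (α₀ + β₁)) +
        Real.cos (2 * (α₁ + β₀)) - Real.cos (2 * (α₁ + β₁)))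

set_option maxHeartbeats 2000000 in
lemma chsh_key (c s C0 S0 C1 S1 D0 T0 D1 T1 : ℝ)
    (hcs : c^2 + s^2 = 2) (ha0 : C0^2 + S0^2 = 1) (ha1 : C1^2 + S1^2 = 1)
    (hb0 : D0^2 + T0^2 = 1) (hb1 : D1^2 + T1^2 = 1) :
    c * (C0 * (D0 + D1) + C1 * (D0 - D1)) + s * (S0 * (T0 + T1) + S1 * (T0 - T1))
      ≤ 2 * Real.sqrt 2 := by
  obtain ⟨P, hP⟩ : ∃ P, P = c^2*(D0+D1)^2 + s^2*(T0+T1)^2 := ⟨_, rfl⟩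
  obtain ⟨Q, hQ⟩ : ∃ Q, Q = c^2*(D0-D1)^2 + s^2*(T0-T1)^2 := ⟨_, rfl⟩
  have hPpos : 0 ≤ P := by rw [hP]; positivity
  have hQpos : 0 ≤ Q := by rw [hQ]; positivity
  have step1 : c * C0 * (D0+D1) + s * S0 * (T0+T1) ≤ Real.sqrt P := by
    have h : (c * C0 * (D0+D1) + s * S0 * (T0+T1))^2 ≤ P := by
      rw [hP]
      nlinarith [sq_nonneg (c * (D0+D1) * S0 - s * (T0+T1) * C0),
        sq_nonneg (c * (D0+D1)), sq_nonneg (s * (T0+T1)), ha0]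
    calc c * C0 * (D0+D1) + s * S0 * (T0+T1)
        ≤ |c * C0 * (D0+D1) + s * S0 * (T0+T1)| := le_abs_self _
      _ = Real.sqrt ((c * C0 * (D0+D1) + s * S0 * (T0+T1))^2) := (Real.sqrt_sq_eq_abs _).symm
      _ ≤ Real.sqrt P := Real.sqrt_le_sqrt h
  have step2 : c * C1 * (D0-D1) + s * S1 * (T0-T1) ≤ Real.sqrt Q := by
    have h : (c * C1 * (D0-D1) + s * S1 * (T0-T1))^2 ≤ Q := by
      rw [hQ]
      nlinarith [sq_nonneg (c * (D0-D1) * S1 - s * (T0-T1) * C1),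
        sq_nonneg (c * (D0-D1)), sq_nonneg (s * (T0-T1)), ha1]
    calc c * C1 * (D0-D1) + s * S1 * (T0-T1)
        ≤ |c * C1 * (D0-D1) + s * S1 * (T0-T1)| := le_abs_self _
      _ = Real.sqrt ((c * C1 * (D0-D1) + s * S1 * (T0-T1))^2) := (Real.sqrt_sq_eq_abs _).symm
      _ ≤ Real.sqrt Q := Real.sqrt_le_sqrt h
  have he0 : (c^2+s^2)*(D0^2+T0^2) = 2 := by rw [hcs, hb0]; ring
  have he1 : (c^2+s^2)*(D1^2+T1^2) = 2 := by rw [hcs, hb1]; ring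
  have h8 : P + Q ≤ 8 := by
    rw [hP, hQ]
    nlinarith [sq_nonneg (c*T0), sq_nonneg (c*T1), sq_nonneg (s*D0), sq_nonneg (s*D1), he0, he1]
  have hid : (8 - P - Q)^2 - 4*(P*Q) -
      (2*((D0+D1)^2 + (T0+T1)^2) - P - (c^2*(T0-T1)^2 + s^2*(D0-D1)^2))^2 = 0 := by
    rw [hP, hQ]
    linear_combination ((-32)*T1^2 + (2)*T1^4 + (-8)*D1^2 + (8)*D1^2*T1^2 + (6)*D1^4 + (-16)*T0*T1 + (16)*T0*T1^3 + (16)*T0*D1^2*T1 + (-32)*T0^2 + (44)*T0^2*T1^2 + (8)*T0^2*D1^2 + (16)*T0^3*T1 + (2)*T0^4 + (16)*D0*D1 + (16)*D0*T0*D1*T1 + (-8)*D0^2 + (8)*D0^2*T1^2 + (-12)*D0^2*D1^2 + (16)*D0^2*T0*T1 + (8)*D0^2*T0^2 + (6)*D0^4 + (-1)*s^2*T1^4 + (-2)*s^2*D1^2*T1^2 + (-1)*s^2*D1^4 + (-4)*s^2*T0*T1^3 + (-4)*s^2*T0*D1^2*T1 + (10)*s^2*T0^2*T1^2 + (-2)*s^2*T0^2*D1^2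 + (-4)*s^2*T0^3*T1 + (-1)*s^2*T0^4 + (4)*s^2*D0*D1*T1^2 + (4)*s^2*D0*D1^3 + (8)*s^2*D0*T0*D1*T1 + (4)*s^2*D0*T0^2*D1 + (-2)*s^2*D0^2*T1^2 + (-6)*s^2*D0^2*D1^2 + (-4)*s^2*D0^2*T0*T1 + (-2)*s^2*D0^2*T0^2 + (4)*s^2*D0^3*D1 + (-1)*s^2*D0^4 + (-1)*c^2*T1^4 + (4)*c^2*D1^2 + (-4)*c^2*D1^2*T1^2 + (-3)*c^2*D1^4 + (8)*c^2*T0*T1 + (-6)*c^2*T0^2*T1^2 + (-4)*c^2*T0^2*D1^2 + (-1)*c^2*T0^4 + (-8)*c^2*D0*D1 + (8)*c^2*D0*T0*D1*T1 + (4)*c^2*D0^2 + (-4)*c^2*D0^2*T1^2 + (6)*c^2*D0^2*D1^2 + (-4)*c^2*D0^2*T0^2 + (-3)*c^2*D0^4) * hcs + ((-64) + (64)*T1^2 + (8)*D1^2 + (16)*T0*T1 + (-16)*D0*D1 + (8)*D0^2 + (-4)*s^2*D1^2 + (-8)*s^2*T0*T1 + (8)*s^2*D0*D1 + (-4)*s^2*D0^2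 + (32)*c^2 + (-64)*c^2*T1^2 + (-8)*c^2*D1^2 + (-16)*c^2*T0*T1 + (16)*c^2*D0*D1 + (-8)*c^2*D0^2 + (2)*c^2*s^2*D1^2 + (4)*c^2*s^2*T0*T1 + (-4)*c^2*s^2*D0*D1 + (2)*c^2*s^2*D0^2 + (2)*c^4*D1^2 + (4)*c^4*T0*T1 + (-4)*c^4*D0*D1 + (2)*c^4*D0^2) * hb0 + ((8)*D1^2 + (16)*T0*T1 + (-16)*D0*D1 + (-56)*D0^2 + (-4)*s^2*D1^2 + (-8)*s^2*T0*T1 + (8)*s^2*D0*D1 + (-4)*s^2*D0^2 + (-32)*c^2 + (-8)*c^2*D1^2 + (-16)*c^2*T0*T1 + (16)*c^2*D0*D1 + (56)*c^2*D0^2 + (2)*c^2*s^2*D1^2 + (4)*c^2*s^2*T0*T1 + (-4)*c^2*s^2*D0*D1 + (2)*c^2*s^2*D0^2 + (2)*c^4*D1^2 + (4)*c^4*T0*T1 + (-4)*c^4*D0*D1 + (2)*c^4*D0^2) * hb1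
  have hPQ : 4 * (P * Q) ≤ (8 - P - Q)^2 := by
    linarith [hid, sq_nonneg (2*((D0+D1)^2 + (T0+T1)^2) - P - (c^2*(T0-T1)^2 + s^2*(D0-D1)^2))]
  have hprod : Real.sqrt P * Real.sqrt Q ≤ (8 - P - Q) / 2 := by
    rw [← Real.sqrt_mul hPpos]
    have h2 : P * Q ≤ ((8 - P - Q) / 2)^2 := by linarith [hPQ]
    calc Real.sqrt (P * Q) ≤ Real.sqrt (((8 - P - Q)/2)^2) := Real.sqrt_le_sqrt h2
      _ = |(8 - P - Q)/2| := Real.sqrt_sq_eq_abs _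
      _ = (8 - P - Q)/2 := abs_of_nonneg (by linarith)
  have step3 : Real.sqrt P + Real.sqrt Q ≤ 2 * Real.sqrt 2 := by
    have hsum : (Real.sqrt P + Real.sqrt Q)^2 ≤ 8 := by
      have e1 : Real.sqrt P ^ 2 = P := Real.sq_sqrt hPpos
      have e2 : Real.sqrt Q ^ 2 = Q := Real.sq_sqrt hQpos
      linarith [e1, e2, hprod, Real.sqrt_nonneg P, Real.sqrt_nonneg Q]
    have h8' : Real.sqrt 8 = 2 * Real.sqrt 2 := by
      rw [show (8:ℝ) = 2^2 * 2 by norm_num, Real.sqrt_mul (by positivity),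
        Real.sqrt_sq (by norm_num : (0:ℝ) ≤ 2)]
    calc Real.sqrt P + Real.sqrt Q
        = Real.sqrt ((Real.sqrt P + Real.sqrt Q)^2) := (Real.sqrt_sq (by positivity)).symm
      _ ≤ Real.sqrt 8 := Real.sqrt_le_sqrt hsum
      _ = 2 * Real.sqrt 2 := h8'
  linarith [step1, step2, step3]

/-- the CHSH score of a Bell-diagonal state is at most `1/2 + R/(2√2)`,
and this is achieved for suitable measurement angles. -/
theorem chshScore_le_and_achieved (R θ : ℝ) (hR : 0 ≤ R) :
    (∀ α₀ α₁ β₀ β₁ : ℝ, chshScore R θ α₀ α₁ β₀ β₁ ≤ 1 / 2 + R / (2 * Real.sqrt 2)) ∧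
    (∃ α₀ α₁ β₀ β₁ : ℝ, chshScore R θ α₀ α₁ β₀ β₁ = 1 / 2 + R / (2 * Real.sqrt 2)) := by
  have hs2 : Real.sqrt 2 > 0 := Real.sqrt_pos.mpr (by norm_num)
  have hs2sq : Real.sqrt 2 * Real.sqrt 2 = 2 := Real.mul_self_sqrt (by norm_num)
  have htarget : R / (2 * Real.sqrt 2) = R / 8 * (2 * Real.sqrt 2) := by
    rw [div_eq_iff (by positivity : (2*Real.sqrt 2) ≠ 0)]
    linear_combination (-(R/2)) * hs2sq
  constructor
  · intro α₀ α₁ β₀ β₁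
    have key := chsh_key (Real.cos θ + Real.sin θ) (Real.cos θ - Real.sin θ)
      (Real.cos (2*α₀)) (Real.sin (2*α₀)) (Real.cos (2*α₁)) (Real.sin (2*α₁))
      (Real.cos (2*β₀)) (Real.sin (2*β₀)) (Real.cos (2*β₁)) (Real.sin (2*β₁))
      (by nlinarith [Real.sin_sq_add_cos_sq θ])
      (by nlinarith [Real.sin_sq_add_cos_sq (2*α₀)])
      (by nlinarith [Real.sin_sq_add_cos_sq (2*α₁)])
      (by nlinarith [Real.sin_sq_add_cos_sq (2*β₀)])
      (by nlinarith [Real.sin_sq_add_cos_sq (2*β₁)])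
    have expand : chshScore R θ α₀ α₁ β₀ β₁ =
        1 / 2 + R / 8 *
          ((Real.cos θ + Real.sin θ) *
              (Real.cos (2*α₀) * (Real.cos (2*β₀) + Real.cos (2*β₁)) +
               Real.cos (2*α₁) * (Real.cos (2*β₀) - Real.cos (2*β₁))) +
           (Real.cos θ - Real.sin θ) *
              (Real.sin (2*α₀) * (Real.sin (2*β₀) + Real.sin (2*β₁)) +
               Real.sin (2*α₁) * (Real.sin (2*β₀) - Real.sin (2*β₁)))) := by
      unfold chshScore
      rw [show (2:ℝ) * (α₀ - β₀) = 2*α₀ - 2*β₀ by ring, show (2:ℝ) * (α₀ - β₁) = 2*α₀ - 2*β₁ by ring,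
          show (2:ℝ) * (α₁ - β₀) = 2*α₁ - 2*β₀ by ring, show (2:ℝ) * (α₁ - β₁) = 2*α₁ - 2*β₁ by ring,
          show (2:ℝ) * (α₀ + β₀) = 2*α₀ + 2*β₀ by ring, show (2:ℝ) * (α₀ + β₁) = 2*α₀ + 2*β₁ by ring,
          show (2:ℝ) * (α₁ + β₀) = 2*α₁ + 2*β₀ by ring, show (2:ℝ) * (α₁ + β₁) = 2*α₁ + 2*β₁ by ring]
      simp only [Real.cos_sub, Real.cos_add]
      ring
    rw [expand, htarget]
    have hR8 : (0:ℝ) ≤ R / 8 := by linarith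
    have := mul_le_mul_of_nonneg_left key hR8
    linarith
  · refine ⟨0, Real.pi/4, (Real.pi/4 - θ)/2, (θ - Real.pi/4)/2, ?_⟩
    unfold chshScore
    rw [show (2:ℝ) * (0 - (Real.pi/4 - θ)/2) = -(Real.pi/4 - θ) by ring,
        show (2:ℝ) * (0 - (θ - Real.pi/4)/2) = (Real.pi/4 - θ) by ring,
        show (2:ℝ) * (Real.pi/4 - (Real.pi/4 - θ)/2) = Real.pi/4 + θ by ring,
        show (2:ℝ) * (Real.pi/4 - (θ - Real.pi/4)/2) = Real.pi - (Real.pi/4 + θ) by ring,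
        show (2:ℝ) * (0 + (Real.pi/4 - θ)/2) = (Real.pi/4 - θ) by ring,
        show (2:ℝ) * (0 + (θ - Real.pi/4)/2) = -(Real.pi/4 - θ) by ring,
        show (2:ℝ) * (Real.pi/4 + (Real.pi/4 - θ)/2) = Real.pi - (Real.pi/4 + θ) by ring,
        show (2:ℝ) * (Real.pi/4 + (θ - Real.pi/4)/2) = Real.pi/4 + θ by ring]
    rw [Real.cos_neg, Real.cos_pi_sub, Real.cos_sub, Real.cos_add,
        Real.cos_pi_div_four, Real.sin_pi_div_four, htarget]
    linear_combination (R * Real.sqrt 2 / 4) * Real.sin_sq_add_cos_sq θ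
end

section
/- Let λ₀ = 1/4 + R·cos(θ)/2 + δ*, λ₁ = 1/4 + R·sin(θ)/2 − δ*, λ₂ = 1/4 − R·sin(θ)/2 − δ*, λ₃ = 1/4 − R·cos(θ)/2 + δ* with δ* = R²·cos(2θ)/4. Then λ₀/(λ₀+λ₁) = λ₂/(λ₂+λ₃) and λ₁/(λ₀+λ₁) = λ₃/(λ₂+λ₃), provided λ₀+λ₁ ≠ 0 and λ₂+λ₃ ≠ 0. -/
open Real

/-- with the optimal `δ* = R²cos(2θ)/4`, the Bell-diagonal eigenvalues
satisfy `λ₀/(λ₀+λ₁) = λ₂/(λ₂+λ₃)` and `λ₁/(λ₀+λ₁) = λ₃/(λ₂+λ₃)`. -/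
theorem eigenvalue_ratio_identities (R θ : ℝ)
    (h01 : (1 / 4 + R * Real.cos θ / 2 + R ^ 2 * Real.cos (2 * θ) / 4) +
        (1 / 4 + R * Real.sin θ / 2 - R ^ 2 * Real.cos (2 * θ) / 4) ≠ 0)
    (h23 : (1 / 4 - R * Real.sin θ / 2 - R ^ 2 * Real.cos (2 * θ) / 4) +
        (1 / 4 - R * Real.cos θ / 2 + R ^ 2 * Real.cos (2 * θ) / 4) ≠ 0) :
    (1 / 4 + R * Real.cos θ / 2 + R ^ 2 * Real.cos (2 * θ) / 4) /
        ((1 / 4 + R * Real.cos θ / 2 + R ^ 2 * Real.cos (2 * θ) / 4) +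
          (1 / 4 + R * Real.sin θ / 2 - R ^ 2 * Real.cos (2 * θ) / 4))
      = (1 / 4 - R * Real.sin θ / 2 - R ^ 2 * Real.cos (2 * θ) / 4) /
        ((1 / 4 - R * Real.sin θ / 2 - R ^ 2 * Real.cos (2 * θ) / 4) +
          (1 / 4 - R * Real.cos θ / 2 + R ^ 2 * Real.cos (2 * θ) / 4)) ∧
    (1 / 4 + R * Real.sin θ / 2 - R ^ 2 * Real.cos (2 * θ) / 4) /
        ((1 / 4 + R * Real.cos θ / 2 + R ^ 2 * Real.cos (2 * θ) / 4) +
          (1 / 4 + R * Real.sin θ / 2 - R ^ 2 * Real.cos (2 * θ) / 4))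
      = (1 / 4 - R * Real.cos θ / 2 + R ^ 2 * Real.cos (2 * θ) / 4) /
        ((1 / 4 - R * Real.sin θ / 2 - R ^ 2 * Real.cos (2 * θ) / 4) +
          (1 / 4 - R * Real.cos θ / 2 + R ^ 2 * Real.cos (2 * θ) / 4)) := by
  have hc : Real.cos (2 * θ) = Real.cos θ ^ 2 - Real.sin θ ^ 2 := by
    rw [Real.cos_two_mul, ← Real.sin_sq_add_cos_sq θ]; ring
  constructor
  · rw [div_eq_div_iff h01 h23]
    linear_combination (R^2/4) * hc
  · rw [div_eq_div_iff h01 h23]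
    linear_combination (-R^2/4) * hc
end

section
/- (Bhatia–Davis inequality) Let X be a real-valued random variable on a probability space with m ≤ X ≤ M almost surely and mean μ = E[X]. Then Var(X) ≤ (M − μ)(μ − m). -/
open MeasureTheory ProbabilityTheory

/-- the Bhatia–Davis inequality: if `m ≤ X ≤ M` almost surely and
`μ = E[X]`, then `Var(X) ≤ (M − μ)(μ − m)`. -/
theorem bhatia_davis {Ω : Type*} [MeasureSpace Ω] [IsProbabilityMeasure (ℙ : Measure Ω)]
    (X : Ω → ℝ) (hX : AEStronglyMeasurable X ℙ) (m M : ℝ)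
    (hbound : ∀ᵐ ω ∂(ℙ : Measure Ω), m ≤ X ω ∧ X ω ≤ M) :
    variance X ℙ ≤ (M - ∫ ω, X ω) * ((∫ ω, X ω) - m) :=
  variance_le_sub_mul_sub hbound hX.aemeasurable
end
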